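/- Every k-coherent property definable in TeamLTL(∼) is definable in ∀^k HyperLTL: for every k-coherent TeamLTL(∼)-formula φ there exists a ∀^k HyperLTL sentence Ψ (namely, either ∀π.⊥ or ∀π₁…∀πₖ.φ^{{π₁,…,πₖ}}) such that for every nonempty team (T,i): (T,i) ⊨ φ if and only if ∅,i ⊨_T Ψ. -/

import Mathlib

set_option maxHeartbeats 1000000

universe u

/-- A trace over the set `α` of atomic propositions: an infinite sequence of
sets of propositions. -/
abbrev Trace (α : Type u) := ℕ → Set α

/-- LTL formulae in negation normal form. -/
inductive LTLForm (α : Type u) : Type u where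
  | pos : α → LTLForm α
  | neg : α → LTLForm α
  | lor : LTLForm α → LTLForm α → LTLForm α
  | land : LTLForm α → LTLForm α → LTLForm α
  | next : LTLForm α → LTLForm α
  | luntil : LTLForm α → LTLForm α → LTLForm α
  | wuntil : LTLForm α → LTLForm α → LTLForm α

namespace LTLForm
variable {α : Type u}

/-- Standard single-trace LTL semantics. -/
def sat (t : Trace α) : ℕ → LTLForm α → Prop
  | i, pos p => p ∈ t i
  | i, neg p => p ∉ t i
  | i, lor φ ψ => sat t i φ ∨ sat t i ψ
  | i, land φ ψ => sat t i φ ∧ sat t i ψ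
  | i, next φ => sat t (i+1) φ
  | i, luntil φ ψ => ∃ k, i ≤ k ∧ sat t k ψ ∧ ∀ m, i ≤ m → m < k → sat t m φ
  | i, wuntil φ ψ => ∀ k, i ≤ k → sat t k φ ∨ ∃ m, i ≤ m ∧ m ≤ k ∧ sat t m ψ

/-- Size of an LTL formula. -/
def size : LTLForm α → ℕ
  | pos _ => 1
  | neg _ => 1
  | lor φ ψ => φ.size + ψ.size + 1
  | land φ ψ => φ.size + ψ.size + 1
  | next φ => φ.size + 1
  | luntil φ ψ => φ.size + ψ.size + 1
  | wuntil φ ψ => φ.size + ψ.size + 1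

end LTLForm

/-- Extensions of `TeamLTL` by atoms and connectives:
Boolean disjunction `⩔`, Boolean negation `∼`, inclusion atoms `⊆`,
the universal subteam quantifier `A`, the singleton subteam quantifier `A¹`
and the non-emptiness atom `∼⊥`. -/
inductive TExt : Type where
  | bdis | bneg | incl | asub | asub1 | nebot
deriving DecidableEq

/-- Formulae of TeamLTL together with all the extensions considered in the paper
(fragments are carved out via `TeamForm.exts`). -/
inductive TeamForm (α : Type u) : Type u where
  | pos : α → TeamForm α
  | neg : α → TeamForm α
  | lor : TeamForm α → TeamForm α → TeamForm α
  | land : TeamForm α → TeamForm α → TeamForm α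
  | next : TeamForm α → TeamForm α
  | luntil : TeamForm α → TeamForm α → TeamForm α
  | wuntil : TeamForm α → TeamForm α → TeamForm α
  | bdis : TeamForm α → TeamForm α → TeamForm α
  | bneg : TeamForm α → TeamForm α
  | incl : List (LTLForm α × LTLForm α) → TeamForm α
  | asub : TeamForm α → TeamForm α
  | asub1 : TeamForm α → TeamForm α
  | nebot : TeamForm α

namespace TeamForm
variable {α : Type u}

/-- Synchronous team semantics for (extended) TeamLTL. -/
def sat : Set (Trace α) → ℕ → TeamForm α → Prop
  | T, i, pos p => ∀ t ∈ T, p ∈ t i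
  | T, i, neg p => ∀ t ∈ T, p ∉ t i
  | T, i, lor φ ψ => ∃ T₁ T₂, T₁ ∪ T₂ = T ∧ sat T₁ i φ ∧ sat T₂ i ψ
  | T, i, land φ ψ => sat T i φ ∧ sat T i ψ
  | T, i, next φ => sat T (i+1) φ
  | T, i, luntil φ ψ => ∃ k, i ≤ k ∧ sat T k ψ ∧ ∀ m, i ≤ m → m < k → sat T m φ
  | T, i, wuntil φ ψ => ∀ k, i ≤ k → sat T k φ ∨ ∃ m, i ≤ m ∧ m ≤ k ∧ sat T m ψ
  | T, i, bdis φ ψ => sat T i φ ∨ sat T i ψ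
  | T, i, bneg φ => ¬ sat T i φ
  | T, i, incl ps => ∀ t ∈ T, ∃ t' ∈ T, ∀ p ∈ ps, (LTLForm.sat t i p.1 ↔ LTLForm.sat t' i p.2)
  | T, i, asub φ => ∀ S, S ⊆ T → sat S i φ
  | T, i, asub1 φ => ∀ t ∈ T, sat {t} i φ
  | T, _, nebot => T.Nonempty

/-- The collection of extensions (atoms/connectives beyond core TeamLTL)
occurring in a formula. -/
def exts : TeamForm α → Set TExt
  | pos _ => ∅
  | neg _ => ∅
  | lor φ ψ => exts φ ∪ exts ψ
  | land φ ψ => exts φ ∪ exts ψ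
  | next φ => exts φ
  | luntil φ ψ => exts φ ∪ exts ψ
  | wuntil φ ψ => exts φ ∪ exts ψ
  | bdis φ ψ => insert TExt.bdis (exts φ ∪ exts ψ)
  | bneg φ => insert TExt.bneg (exts φ)
  | incl _ => {TExt.incl}
  | asub φ => insert TExt.asub (exts φ)
  | asub1 φ => insert TExt.asub1 (exts φ)
  | nebot => {TExt.nebot}

/-- Size of an (extended) TeamLTL formula. -/
def size : TeamForm α → ℕ
  | pos _ => 1
  | neg _ => 1
  | lor φ ψ => φ.size + ψ.size + 1
  | land φ ψ => φ.size + ψ.size + 1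
  | next φ => φ.size + 1
  | luntil φ ψ => φ.size + ψ.size + 1
  | wuntil φ ψ => φ.size + ψ.size + 1
  | bdis φ ψ => φ.size + ψ.size + 1
  | bneg φ => φ.size + 1
  | incl ps => (ps.map (fun p => p.1.size + p.2.size)).sum + 1
  | asub φ => φ.size + 1
  | asub1 φ => φ.size + 1
  | nebot => 1

end TeamForm

universe v

/-- Quantifier-free formulae of HyperLTL / HyperQPTL(⁺) over atomic
propositions `α` and trace variables `V`, in negation normal form. -/
inductive QF (α : Type u) (V : Type v) : Type (max u v) where
  | pos : α → V → QF α V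
  | neg : α → V → QF α V
  | lor : QF α V → QF α V → QF α V
  | land : QF α V → QF α V → QF α V
  | next : QF α V → QF α V
  | luntil : QF α V → QF α V → QF α V
  | wuntil : QF α V → QF α V → QF α V

namespace QF
variable {α : Type u} {V : Type v}

/-- Semantics of quantifier-free hyperlogic formulae with respect to a trace
assignment `asgn` and a time point `i` (time advances uniformly on all
traces). -/
def sat (asgn : V → Trace α) : ℕ → QF α V → Prop
  | i, pos p π => p ∈ asgn π i
  | i, neg p π => p ∉ asgn π i
  | i, lor φ ψ => sat asgn i φ ∨ sat asgn i ψ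
  | i, land φ ψ => sat asgn i φ ∧ sat asgn i ψ
  | i, next φ => sat asgn (i+1) φ
  | i, luntil φ ψ => ∃ k, i ≤ k ∧ sat asgn k ψ ∧ ∀ m, i ≤ m → m < k → sat asgn m φ
  | i, wuntil φ ψ => ∀ k, i ≤ k → sat asgn k φ ∨ ∃ m, i ≤ m ∧ m ≤ k ∧ sat asgn m ψ

/-- Size of a quantifier-free formula. -/
def size : QF α V → ℕ
  | pos _ _ => 1
  | neg _ _ => 1
  | lor φ ψ => φ.size + ψ.size + 1
  | land φ ψ => φ.size + ψ.size + 1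
  | next φ => φ.size + 1
  | luntil φ ψ => φ.size + ψ.size + 1
  | wuntil φ ψ => φ.size + ψ.size + 1

/-- Negation of a quantifier-free formula, in negation normal form. -/
def dual : QF α V → QF α V
  | pos p π => neg p π
  | neg p π => pos p π
  | lor φ ψ => land (dual φ) (dual ψ)
  | land φ ψ => lor (dual φ) (dual ψ)
  | next φ => next (dual φ)
  | luntil φ ψ => wuntil (dual ψ) (land (dual φ) (dual ψ))
  | wuntil φ ψ => luntil (dual ψ) (land (dual φ) (dual ψ))

end QF

/-- Formulae of HyperQPTL⁺: a quantifier prefix consisting of trace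
quantifiers (`exTr`/`allTr`), uniform propositional quantifiers
(`exU`/`allU`) and non-uniform propositional quantifiers (`exN`/`allN`),
followed by a quantifier-free formula.  HyperQPTL is the fragment without
`exN`/`allN`; HyperLTL is the fragment with only trace quantifiers. -/
inductive HQ (α : Type u) (V : Type v) : Type (max u v) where
  | qf : QF α V → HQ α V
  | exTr : V → HQ α V → HQ α V
  | allTr : V → HQ α V → HQ α V
  | exU : α → HQ α V → HQ α V
  | allU : α → HQ α V → HQ α V
  | exN : α → HQ α V → HQ α V
  | allN : α → HQ α V → HQ α V

namespace HQ
variable {α : Type u} {V : Type v}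

/-- Reinterpretation of the proposition `q` along a trace according to the
`q`-sequence `s`. -/
def reint (q : α) (s : ℕ → Prop) (t : Trace α) : Trace α :=
  fun j => {a | (a = q ∧ s j) ∨ (a ≠ q ∧ a ∈ t j)}

/-- Projection of a trace to the propositions other than `q`. -/
def proj (q : α) (t : Trace α) : Trace α :=
  fun j => {a | a ≠ q ∧ a ∈ t j}

/-- Semantics of HyperQPTL⁺ over a set `T` of traces, a trace assignment
`asgn` and a time point `i`. -/
def sat [DecidableEq V] (T : Set (Trace α)) (asgn : V → Trace α) (i : ℕ) :
    HQ α V → Prop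
  | qf ψ => QF.sat asgn i ψ
  | exTr π φ => ∃ t ∈ T, sat T (Function.update asgn π t) i φ
  | allTr π φ => ∀ t ∈ T, sat T (Function.update asgn π t) i φ
  | exU q φ => ∃ s : ℕ → Prop,
      sat ((reint q s) '' T) (fun π => reint q s (asgn π)) i φ
  | allU q φ => ∀ s : ℕ → Prop,
      sat ((reint q s) '' T) (fun π => reint q s (asgn π)) i φ
  | exN q φ => ∃ (T' : Set (Trace α)) (asgn' : V → Trace α),
      (proj q '' T = proj q '' T') ∧ (∀ π, proj q (asgn π) = proj q (asgn' π)) ∧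
      (∀ π, asgn' π ∈ T') ∧ sat T' asgn' i φ
  | allN q φ => ∀ (T' : Set (Trace α)) (asgn' : V → Trace α),
      (proj q '' T = proj q '' T') → (∀ π, proj q (asgn π) = proj q (asgn' π)) →
      (∀ π, asgn' π ∈ T') → sat T' asgn' i φ

/-- A sentence is satisfied by a set of traces at time `i` if it holds under
every (equivalently, under some) trace assignment. -/
def sentSat [DecidableEq V] (T : Set (Trace α)) (i : ℕ) (φ : HQ α V) : Prop :=
  ∀ asgn : V → Trace α, sat T asgn i φ

/-- Size of a HyperQPTL⁺ formula. -/
def size : HQ α V → ℕ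
  | qf ψ => ψ.size + 1
  | exTr _ φ => φ.size + 1
  | allTr _ φ => φ.size + 1
  | exU _ φ => φ.size + 1
  | allU _ φ => φ.size + 1
  | exN _ φ => φ.size + 1
  | allN _ φ => φ.size + 1

end HQ

/-- Lifting a trace over `α` to a trace over `α ⊕ ℕ` (the original
propositions, together with countably many fresh propositions that never
hold). -/
def liftTrace {α : Type u} (t : Trace α) : Trace (α ⊕ ℕ) :=
  fun j => Sum.inl '' t j

/-- Lifting a team over `α` to a team over `α ⊕ ℕ`. -/
def liftTeam {α : Type u} (T : Set (Trace α)) : Set (Trace (α ⊕ ℕ)) :=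
  liftTrace '' T

namespace PhiTr
variable {α : Type u} {V : Type v}

/-- A tautological quantifier-free formula `⊤ := p_π ∨ ¬p_π`
(`d` and `v` are default proposition/variable symbols). -/
def topQ (d : α) (v : V) : QF α V := .lor (.pos d v) (.neg d v)

/-- An unsatisfiable quantifier-free formula `⊥ := p_π ∧ ¬p_π`. -/
def botQ (d : α) (v : V) : QF α V := .land (.pos d v) (.neg d v)

/-- Big conjunction of a list of quantifier-free formulae. -/
def bigAndQ (d : α) (v : V) : List (QF α V) → QF α V
  | [] => topQ d v
  | [φ] => φ
  | φ :: φs => .land φ (bigAndQ d v φs)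

/-- Big disjunction of a list of quantifier-free formulae. -/
def bigOrQ (d : α) (v : V) : List (QF α V) → QF α V
  | [] => botQ d v
  | [φ] => φ
  | φ :: φs => .lor φ (bigOrQ d v φs)

/-- The translation `φ ↦ φ^Φ` from `TeamLTL(∼)` to quantifier-free HyperLTL:
`p^Φ = ⋀_{π∈Φ} p_π`, `(¬p)^Φ = ⋀_{π∈Φ} ¬p_π`, `(∼φ)^Φ = nnf of ¬(φ^Φ)`,
`(Xφ)^Φ = X(φ^Φ)`, `(φ∧ψ)^Φ = φ^Φ ∧ ψ^Φ`,
`(φ∨ψ)^Φ = ⋁_{Φ₀∪Φ₁=Φ} (φ^{Φ₀} ∧ ψ^{Φ₁})`, `(φUψ)^Φ = φ^Φ U ψ^Φ`,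
`(φWψ)^Φ = φ^Φ W ψ^Φ`.  (Clauses for connectives outside of `TeamLTL(∼)`
are irrelevant.) -/
noncomputable def trPhi [DecidableEq V] (d : α) (v : V) : TeamForm α → Finset V → QF α V
  | .pos p, Φ => bigAndQ d v (Φ.toList.map fun π => .pos p π)
  | .neg p, Φ => bigAndQ d v (Φ.toList.map fun π => .neg p π)
  | .bneg φ, Φ => (trPhi d v φ Φ).dual
  | .next φ, Φ => .next (trPhi d v φ Φ)
  | .land φ ψ, Φ => .land (trPhi d v φ Φ) (trPhi d v ψ Φ)
  | .lor φ ψ, Φ => bigOrQ d v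
      ((((Φ.powerset ×ˢ Φ.powerset).filter (fun P => P.1 ∪ P.2 = Φ)).toList).map
        (fun P => .land (trPhi d v φ P.1) (trPhi d v ψ P.2)))
  | .luntil φ ψ, Φ => .luntil (trPhi d v φ Φ) (trPhi d v ψ Φ)
  | .wuntil φ ψ, Φ => .wuntil (trPhi d v φ Φ) (trPhi d v ψ Φ)
  | _, _ => topQ d v

/-- A TeamLTL formula is downward closed if its satisfaction is inherited by
all subteams. -/
def DownwardClosed (φ : TeamForm α) : Prop :=
  ∀ (T S : Set (Trace α)) (i : ℕ), S ⊆ T → TeamForm.sat T i φ → TeamForm.sat S i φ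

/-- A TeamLTL formula is `k`-coherent if its satisfaction by a team is
equivalent to its satisfaction by all subteams of size at most `k`. -/
def KCoherent (k : ℕ) (φ : TeamForm α) : Prop :=
  ∀ (T : Set (Trace α)) (i : ℕ),
    TeamForm.sat T i φ ↔ ∀ S ⊆ T, S.Finite → S.ncard ≤ k → TeamForm.sat S i φ

end PhiTr

/-!
Under a trace assignment, `trPhi φ Φ` holds exactly when `φ` holds on the team of traces assigned
to `Φ`: the disjunction over splittings `Φ₀ ∪ Φ₁ = Φ` enumerates the team splittings of `∨`,
and `∼` becomes the dual. Hence `∀π₁…∀πₖ. φ^{π₁,…,πₖ}` states that `φ` holds on every subteam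
spanned by `k` (not necessarily distinct) traces, which for a nonempty team is `k`-coherence.
The alternative `⊥` is never needed: if `φ` fails on `∅`, coherence makes it fail on every team,
and the translation then fails on every tuple.
-/

theorem not_until_iff {P Q : ℕ → Prop} {i : ℕ} :
    (¬ ∃ k, i ≤ k ∧ Q k ∧ ∀ m, i ≤ m → m < k → P m) ↔
      ∀ k, i ≤ k → ¬ Q k ∨ ∃ m, i ≤ m ∧ m ≤ k ∧ ¬ P m ∧ ¬ Q m := by
  classical
  constructor
  · intro h k hik
    by_cases hQk : Q k
    · have hex : ∃ j, i ≤ j ∧ Q j := ⟨k, hik, hQk⟩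
      obtain ⟨hij, hQj⟩ := Nat.find_spec hex
      -- the first `Q`-position must be preceded by a failure of `P`
      obtain ⟨m, him, hmj, hPm⟩ : ∃ m, i ≤ m ∧ m < Nat.find hex ∧ ¬ P m := by
        by_contra! hP
        exact h ⟨_, hij, hQj, hP⟩
      exact Or.inr ⟨m, him, hmj.le.trans (Nat.find_min' hex ⟨hik, hQk⟩), hPm,
        fun hQm => Nat.find_min hex hmj ⟨him, hQm⟩⟩
    · exact Or.inl hQk
  · rintro h ⟨k, hik, hQk, hP⟩
    obtain hQk' | ⟨m, him, hmk, hPm, hQm⟩ := h k hik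
    · exact hQk' hQk
    · obtain hmk | rfl := hmk.lt_or_eq
      · exact hPm (hP m him hmk)
      · exact hQm hQk

theorem not_weakUntil_iff {P Q : ℕ → Prop} {i : ℕ} :
    (¬ ∀ k, i ≤ k → P k ∨ ∃ m, i ≤ m ∧ m ≤ k ∧ Q m) ↔
      ∃ k, i ≤ k ∧ (¬ P k ∧ ¬ Q k) ∧ ∀ m, i ≤ m → m < k → ¬ Q m := by
  constructor
  · intro h
    push Not at h
    obtain ⟨k, hik, hPk, hQ⟩ := h
    exact ⟨k, hik, ⟨hPk, hQ k hik le_rfl⟩, fun m him hmk => hQ m him hmk.le⟩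
  · rintro ⟨k, hik, ⟨hPk, hQk⟩, hQ⟩ h
    obtain hPk' | ⟨m, him, hmk, hQm⟩ := h k hik
    · exact hPk hPk'
    · obtain hmk | rfl := hmk.lt_or_eq
      · exact hQ m him hmk hQm
      · exact hQk hQm

namespace QF
variable {α : Type u} {V : Type v}

theorem sat_dual (asgn : V → Trace α) (ψ : QF α V) (i : ℕ) :
    sat asgn i ψ.dual ↔ ¬ sat asgn i ψ := by
  induction ψ generalizing i with
  | pos | neg => simp [dual, sat]
  | lor φ ψ ihφ ihψ => simp [dual, sat, ihφ, ihψ, not_or]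
  | land φ ψ ihφ ihψ => simp only [dual, sat, ihφ, ihψ]; tauto
  | next φ ih => simp [dual, sat, ih]
  | luntil φ ψ ihφ ihψ => simp only [dual, sat, ihφ, ihψ, not_until_iff]
  | wuntil φ ψ ihφ ihψ => simp only [dual, sat, ihφ, ihψ, not_weakUntil_iff]

end QF

theorem Finset.exists_union_eq_of_union_eq_image {V β : Type*} [DecidableEq V] {f : V → β}
    {Φ : Finset V} {T₁ T₂ : Set β} (h : T₁ ∪ T₂ = f '' Φ) :
    ∃ P₁ P₂ : Finset V, P₁ ∪ P₂ = Φ ∧ f '' P₁ = T₁ ∧ f '' P₂ = T₂ := by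
  classical
  have image_filter {T : Set β} (hT : T ⊆ f '' Φ) : f '' (Φ.filter (f · ∈ T) : Set V) = T := by
    rw [Finset.coe_filter]
    exact (Set.image_inter_preimage f _ T).trans (Set.inter_eq_right.mpr hT)
  refine ⟨Φ.filter (f · ∈ T₁), Φ.filter (f · ∈ T₂), ?_, ?_, ?_⟩
  · rw [← Finset.filter_or, Finset.filter_true_of_mem]
    intro π hπ
    simpa [← h] using Set.mem_image_of_mem f (Finset.mem_coe.mpr hπ)
  · exact image_filter (h ▸ Set.subset_union_left)
  · exact image_filter (h ▸ Set.subset_union_right)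

theorem Set.ncard_range_fin_le {β : Type*} {k : ℕ} (f : Fin k → β) : (Set.range f).ncard ≤ k := by
  simpa [Set.image_univ] using Set.ncard_image_le (f := f) (s := Set.univ)

theorem Set.Finite.exists_fin_range_eq {β : Type*} {S : Set β} {k : ℕ} (hS : S.Finite)
    (hne : S.Nonempty) (hk : S.ncard ≤ k) : ∃ f : Fin k → β, Set.range f = S := by
  have := hS.fintype
  obtain ⟨e⟩ : Nonempty (S ↪ Fin k) :=
    Function.Embedding.nonempty_of_card_le <| by
      rwa [Fintype.card_fin, ← Nat.card_eq_fintype_card, Nat.card_coe_set_eq]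
  obtain ⟨g, hg⟩ := Function.exists_surjective_iff.mpr
    ⟨⟨fun _ => ⟨_, hne.some_mem⟩⟩, ⟨e⟩⟩
  exact ⟨Subtype.val ∘ g, by rw [Set.range_comp, hg.range_eq, Set.image_univ, Subtype.range_coe]⟩

namespace PhiTr
variable {α : Type u} {V : Type v}

theorem sat_topQ (d : α) (v : V) (asgn : V → Trace α) (i : ℕ) : (topQ d v).sat asgn i :=
  Classical.em _

theorem not_sat_botQ (d : α) (v : V) (asgn : V → Trace α) (i : ℕ) : ¬ (botQ d v).sat asgn i :=
  fun h => h.2 h.1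

theorem sat_bigAndQ (d : α) (v : V) (asgn : V → Trace α) (i : ℕ) (L : List (QF α V)) :
    (bigAndQ d v L).sat asgn i ↔ ∀ χ ∈ L, χ.sat asgn i := by
  fun_induction bigAndQ d v L <;> simp_all [QF.sat, sat_topQ]

theorem sat_bigOrQ (d : α) (v : V) (asgn : V → Trace α) (i : ℕ) (L : List (QF α V)) :
    (bigOrQ d v L).sat asgn i ↔ ∃ χ ∈ L, χ.sat asgn i := by
  fun_induction bigOrQ d v L <;> simp_all [QF.sat, not_sat_botQ]

theorem sat_trPhi [DecidableEq V] (d : α) (v : V) {φ : TeamForm α} (hφ : φ.exts ⊆ {TExt.bneg})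
    (Φ : Finset V) (asgn : V → Trace α) (i : ℕ) :
    (trPhi d v φ Φ).sat asgn i ↔ TeamForm.sat (asgn '' Φ) i φ := by
  induction φ generalizing Φ i with
  | pos p | neg p => simp [trPhi, QF.sat, TeamForm.sat, sat_bigAndQ]
  | lor φ ψ ihφ ihψ =>
    simp only [TeamForm.exts, Set.union_subset_iff] at hφ
    simp only [trPhi, TeamForm.sat, sat_bigOrQ, List.mem_map, Finset.mem_toList,
      Finset.mem_filter, Finset.mem_product, Finset.mem_powerset]
    constructor
    · rintro ⟨-, ⟨⟨P₁, P₂⟩, ⟨-, hP⟩, rfl⟩, h₁, h₂⟩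
      exact ⟨_, _, by rw [← hP, Finset.coe_union, Set.image_union], (ihφ hφ.1 _ _).mp h₁,
        (ihψ hφ.2 _ _).mp h₂⟩
    · rintro ⟨T₁, T₂, hT, h₁, h₂⟩
      obtain ⟨P₁, P₂, rfl, rfl, rfl⟩ := Finset.exists_union_eq_of_union_eq_image hT
      exact ⟨_, ⟨⟨P₁, P₂⟩, ⟨⟨Finset.subset_union_left, Finset.subset_union_right⟩, rfl⟩, rfl⟩,
        (ihφ hφ.1 _ _).mpr h₁, (ihψ hφ.2 _ _).mpr h₂⟩
  | land φ ψ ihφ ihψ | luntil φ ψ ihφ ihψ | wuntil φ ψ ihφ ihψ =>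
    simp only [TeamForm.exts, Set.union_subset_iff] at hφ
    simp only [trPhi, QF.sat, TeamForm.sat, ihφ hφ.1, ihψ hφ.2]
  | next φ ih => simp only [trPhi, QF.sat, TeamForm.sat, ih hφ]
  | bneg φ ih =>
    simp only [trPhi, TeamForm.sat, QF.sat_dual, ih ((Set.subset_insert _ _).trans hφ)]
  | bdis | incl | asub | asub1 | nebot => simp [TeamForm.exts] at hφ

theorem KCoherent.sat_iff_forall_range {k : ℕ} {φ : TeamForm α} (hφ : KCoherent k φ)
    {T : Set (Trace α)} (hT : T.Nonempty) (i : ℕ) :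
    TeamForm.sat T i φ ↔
      ∀ f : Fin k → Trace α, (∀ j, f j ∈ T) → TeamForm.sat (Set.range f) i φ := by
  refine ⟨fun h f hf => (hφ T i).mp h _ (Set.range_subset_iff.mpr hf) (Set.finite_range f)
    (Set.ncard_range_fin_le f), fun h => (hφ T i).mpr fun S hST hS hSk => ?_⟩
  obtain rfl | hne := S.eq_empty_or_nonempty
  · -- coherence passes satisfaction from any team down to the empty one
    obtain ⟨t, ht⟩ := hT
    exact (hφ _ i).mp (h (fun _ => t) fun _ => ht) ∅ (Set.empty_subset _) Set.finite_empty
      (by simp)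
  · obtain ⟨f, rfl⟩ := hS.exists_fin_range_eq hne hSk
    exact h f (Set.range_subset_iff.mp hST)

end PhiTr

namespace HQ
variable {α : Type u} {V : Type v}

theorem sat_foldr_allTr [DecidableEq V] (T : Set (Trace α)) (i : ℕ) (ψ : QF α V) (L : List V)
    (asgn : V → Trace α) :
    sat T asgn i (L.foldr allTr (qf ψ)) ↔
      ∀ asgn' : V → Trace α, (∀ π ∈ L, asgn' π ∈ T) → (∀ π ∉ L, asgn' π = asgn π) →
        ψ.sat asgn' i := by
  induction L generalizing asgn with
  | nil =>
    simp only [List.foldr_nil, sat, List.not_mem_nil, not_false_eq_true, forall_const]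
    refine ⟨fun h asgn' h' => ?_, fun h => h asgn fun _ => rfl⟩
    obtain rfl : asgn' = asgn := funext h'
    exact h
  | cons π L ih =>
    simp only [List.foldr_cons, sat, ih, List.mem_cons, not_or]
    constructor
    · intro h asgn' hT heq
      refine h (asgn' π) (hT π (Or.inl rfl)) asgn' (fun π' hπ' => hT π' (Or.inr hπ'))
        fun π' hπ' => ?_
      rcases eq_or_ne π' π with rfl | hne
      · simp
      · rw [Function.update_of_ne hne]; exact heq π' ⟨hne, hπ'⟩
    · intro h t ht asgn' hT heq
      refine h asgn' (fun π' hπ' => ?_) fun π' ⟨hne, hπ'⟩ => ?_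
      · by_cases hL : π' ∈ L
        · exact hT π' hL
        · obtain rfl := hπ'.resolve_right hL
          rw [heq π' hL, Function.update_self]
          exact ht
      · rw [heq π' hπ', Function.update_of_ne hne]

end HQ

namespace Stmt7
open PhiTr
variable {α : Type u}

/-- The `∀^k` HyperLTL sentence `∀π₁…∀πₖ.ψ`. -/
def forallK {k : ℕ} (ψ : QF α (Fin k)) : HQ α (Fin k) :=
  (List.finRange k).foldr (fun j acc => HQ.allTr j acc) (HQ.qf ψ)

theorem sentSat_forallK {k : ℕ} (ψ : QF α (Fin k)) (T : Set (Trace α)) (i : ℕ) :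
    HQ.sentSat T i (forallK ψ) ↔ ∀ f : Fin k → Trace α, (∀ j, f j ∈ T) → ψ.sat f i := by
  simp [HQ.sentSat, forallK, HQ.sat_foldr_allTr]

/-- Every `k`-coherent property definable in `TeamLTL(∼)` is
also definable in `∀^k HyperLTL`: for every `k`-coherent
`TeamLTL(∼)`-formula `φ` there is a quantifier-free HyperLTL formula `ψ`
over the trace variables `π₁,…,πₖ` — namely either `⊥` or
`φ^{{π₁,…,πₖ}}` — such that for every nonempty team `(T,i)`:
`(T,i) ⊨ φ` iff `∅,i ⊨_T ∀π₁…∀πₖ.ψ`. -/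
theorem stmt_7 [Inhabited α] (k : ℕ) (hk : 0 < k) (φ : TeamForm α)
    (hφ : φ.exts ⊆ {TExt.bneg}) (hcoh : KCoherent k φ) :
    ∃ ψ : QF α (Fin k),
      (ψ = botQ default ⟨0, hk⟩ ∨
        ψ = trPhi default ⟨0, hk⟩ φ (Finset.univ : Finset (Fin k))) ∧
      ∀ (T : Set (Trace α)) (i : ℕ), T.Nonempty →
        (TeamForm.sat T i φ ↔ HQ.sentSat T i (forallK ψ)) := by
  refine ⟨_, Or.inr rfl, fun T i hT => ?_⟩
  rw [hcoh.sat_iff_forall_range hT, sentSat_forallK]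
  refine forall_congr' fun f => imp_congr_right fun _ => ?_
  rw [sat_trPhi default _ hφ, Finset.coe_univ, Set.image_univ]

end Stmt7
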